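/- arXiv:1909.04587 — 4 statements merged into one kernel-verified Lean document; each statement's English description precedes it below -/
import Mathlib

section
/- Let m₁, m₂, χ₁, χ₂, C > 0 and χ₃ ∈ ℝ satisfy 4m₁m₂χ₁χ₂C⁸ < √(1 − 4m₂χ₃C⁴). Then there exist a, b, c > 0 such that m₁(χ₁²/b + c)C⁴ < 1 and m₂((aχ₃ + b)²/b + a²χ₂²/c)C⁴ < a. -/
/-!
Write `K = C⁴` and look for `b = χ₁ / r`, `c = χ₁ r`, `a = b / t` with `t = √(χ₃² + (χ₂/r)²)`.
Then the first coefficient condition reads `2 m₁ χ₁ K r < 1`, and the second one collapses to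
`2 m₂ K (χ₃ + t) < 1`, which after squaring is `2 m₂ K χ₂ / r < √(1 - 4 m₂ χ₃ K)`.
A radius `r` meeting both bounds exists exactly when the product of the two constants is below
`√(1 - 4 m₂ χ₃ K)`, which is the smallness condition.
-/

open Real

lemma exists_pos_mul_lt_one_and_div_lt {α β s : ℝ} (hα : 0 < α) (hβ : 0 < β) (h : α * β < s) :
    ∃ r > 0, α * r < 1 ∧ β / r < s := by
  have hs : 0 < s := (mul_pos hα hβ).trans h
  obtain ⟨r, hβr, hrα⟩ : ∃ r, β / s < r ∧ r < 1 / α :=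
    exists_between (by rw [div_lt_div_iff₀ hs hα]; linarith)
  have hr : 0 < r := (div_pos hβ hs).trans hβr
  exact ⟨r, hr, (lt_div_iff₀' hα).1 hrα, (div_lt_iff₀ hr).2 ((div_lt_iff₀' hs).1 hβr)⟩

lemma mul_add_sqrt_sq_add_sq_lt_one {u x y : ℝ} (hu : 0 < u) (hy : 0 ≤ y)
    (h : u * y < √(1 - 2 * u * x)) : u * (x + √(x ^ 2 + y ^ 2)) < 1 := by
  have hpos : 0 < 1 - 2 * u * x := Real.sqrt_pos.1 ((mul_nonneg hu.le hy).trans_lt h)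
  have hsq : (u * y) ^ 2 < 1 - 2 * u * x := (Real.lt_sqrt (mul_nonneg hu.le hy)).1 h
  have hroot : u * √(x ^ 2 + y ^ 2) < 1 - u * x := by
    refine lt_of_pow_lt_pow_left₀ 2 (by linarith) ?_
    rw [mul_pow, Real.sq_sqrt (by positivity)]
    nlinarith
  linarith

lemma div_add_sq_div_eq_two_mul {b r t x y : ℝ} (hb : b ≠ 0) (hr : r ≠ 0) (ht : t ≠ 0)
    (htsq : t ^ 2 = x ^ 2 + (y / r) ^ 2) :
    (b / t * x + b) ^ 2 / b + (b / t) ^ 2 * y ^ 2 / (b * r ^ 2) = 2 * (b / t) * (x + t) := by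
  field_simp
  rw [div_pow] at htsq
  field_simp at htsq
  linear_combination -htsq

/-- Core algebraic claim in the proof of Lemma 3.3: under the smallness condition (3.11)
`4m₁m₂χ₁χ₂C⁸ < √(1 − 4m₂χ₃C⁴)`, there exist `a, b, c > 0` making both coefficients
`A = 1 − m₁(χ₁²/b + c)C⁴` and `B = a − m₂((aχ₃+b)²/b + a²χ₂²/c)C⁴` positive. -/
theorem stmt3 (m₁ m₂ χ₁ χ₂ C χ₃ : ℝ)
    (hm₁ : 0 < m₁) (hm₂ : 0 < m₂) (hχ₁ : 0 < χ₁) (hχ₂ : 0 < χ₂) (hC : 0 < C)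
    (hsmall : 4 * m₁ * m₂ * χ₁ * χ₂ * C ^ 8 < Real.sqrt (1 - 4 * m₂ * χ₃ * C ^ 4)) :
    ∃ a b c : ℝ, 0 < a ∧ 0 < b ∧ 0 < c ∧
      m₁ * (χ₁ ^ 2 / b + c) * C ^ 4 < 1 ∧
      m₂ * ((a * χ₃ + b) ^ 2 / b + a ^ 2 * χ₂ ^ 2 / c) * C ^ 4 < a := by
  obtain ⟨r, hr, hr₁, hr₂⟩ := exists_pos_mul_lt_one_and_div_lt
    (α := 2 * m₁ * χ₁ * C ^ 4) (β := 2 * m₂ * C ^ 4 * χ₂) (by positivity) (by positivity)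
    (by convert hsmall using 1; ring)
  set t := √(χ₃ ^ 2 + (χ₂ / r) ^ 2)
  have ht : 0 < t := Real.sqrt_pos.2 (by positivity)
  have hb : 0 < χ₁ / r := by positivity
  have hsecond : 2 * m₂ * C ^ 4 * (χ₃ + t) < 1 :=
    mul_add_sqrt_sq_add_sq_lt_one (by positivity) (by positivity)
      (by convert hr₂ using 1 <;> ring_nf)
  refine ⟨χ₁ / r / t, χ₁ / r, χ₁ * r, by positivity, hb, by positivity, ?_, ?_⟩
  · have hfirst : χ₁ ^ 2 / (χ₁ / r) + χ₁ * r = 2 * χ₁ * r := by field_simp; ring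
    rw [hfirst]
    linarith
  · have hc : χ₁ * r = χ₁ / r * r ^ 2 := by field_simp
    rw [hc, div_add_sq_div_eq_two_mul hb.ne' hr.ne' ht.ne' (Real.sq_sqrt (by positivity))]
    nlinarith [div_pos hb ht]
end

section
/- Let k, η₁, η₂ > 0 and χ ∈ ℝ satisfy k²η₁η₂ + kη₁χ⁺ < 4, where χ⁺ = max{χ, 0}. Then there exist ε₁, ε₂, ε₃ > 0 such that (ε₁ + ε₂ + ε₃)k < 4η₂/η₁ and (η₂²/ε₁ + η₂²/(4ε₂) + η₂²/(4ε₃) + η₁χ⁺)k < 4. -/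
/-!
Take `ε₁ = s` and `ε₂ = ε₃ = s / 2`. The two conditions become `s < 2η₂ / (kη₁)` and
`2η₂²k / (4 - kη₁χ⁺) < s`, and this interval is nonempty exactly when `k²η₁η₂ + kη₁χ⁺ < 4`.
-/

theorem div_add_div_four_mul_half_add_div_four_mul_half {K : Type*} [Field K] [CharZero K]
    (a s : K) : a / s + a / (4 * (s / 2)) + a / (4 * (s / 2)) = 2 * a / s := by
  ring

theorem sub_pos_of_sq_mul_mul_add_lt {k η₁ η₂ c : ℝ}
    (hk : 0 < k) (hη₁ : 0 < η₁) (hη₂ : 0 < η₂) (hsmall : k ^ 2 * η₁ * η₂ + k * η₁ * c < 4) :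
    0 < 4 - k * η₁ * c := by
  nlinarith [mul_pos (mul_pos (pow_pos hk 2) hη₁) hη₂]

theorem two_mul_sq_mul_div_lt_two_mul_div {k η₁ η₂ c : ℝ}
    (hk : 0 < k) (hη₁ : 0 < η₁) (hη₂ : 0 < η₂) (hsmall : k ^ 2 * η₁ * η₂ + k * η₁ * c < 4) :
    2 * η₂ ^ 2 * k / (4 - k * η₁ * c) < 2 * η₂ / (k * η₁) := by
  rw [div_lt_div_iff₀ (sub_pos_of_sq_mul_mul_add_lt hk hη₁ hη₂ hsmall) (by positivity)]
  nlinarith [mul_pos hk hη₂]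

/-- Algebraic core (4.15)–(4.17) of Lemma 4.1: under `k²η₁η₂ + kη₁χ⁺ < 4` there exist
`ε₁, ε₂, ε₃ > 0` such that `(ε₁ + ε₂ + ε₃)k < 4η₂/η₁` and
`(η₂²/ε₁ + η₂²/(4ε₂) + η₂²/(4ε₃) + η₁χ⁺)k < 4`. -/
theorem stmt4 (k η₁ η₂ χ : ℝ)
    (hk : 0 < k) (hη₁ : 0 < η₁) (hη₂ : 0 < η₂)
    (hsmall : k ^ 2 * η₁ * η₂ + k * η₁ * max χ 0 < 4) :
    ∃ ε₁ ε₂ ε₃ : ℝ, 0 < ε₁ ∧ 0 < ε₂ ∧ 0 < ε₃ ∧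
      (ε₁ + ε₂ + ε₃) * k < 4 * η₂ / η₁ ∧
      (η₂ ^ 2 / ε₁ + η₂ ^ 2 / (4 * ε₂) + η₂ ^ 2 / (4 * ε₃) + η₁ * max χ 0) * k < 4 := by
  set c := max χ 0
  have hD := sub_pos_of_sq_mul_mul_add_lt hk hη₁ hη₂ hsmall
  obtain ⟨s, hlow, hupp⟩ := exists_between (two_mul_sq_mul_div_lt_two_mul_div hk hη₁ hη₂ hsmall)
  have hs : 0 < s := lt_trans (by positivity) hlow
  refine ⟨s, s / 2, s / 2, hs, half_pos hs, half_pos hs, ?_, ?_⟩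
  · have hupp' : s * (k * η₁) < 2 * η₂ := (lt_div_iff₀ (by positivity)).mp hupp
    rw [lt_div_iff₀ hη₁]
    linarith
  · have hlow' : 2 * η₂ ^ 2 * k / s < 4 - k * η₁ * c :=
      (div_lt_comm₀ hD hs).mp hlow
    rw [div_add_div_four_mul_half_add_div_four_mul_half]
    calc (2 * η₂ ^ 2 / s + η₁ * c) * k = 2 * η₂ ^ 2 * k / s + k * η₁ * c := by ring
      _ < 4 := by linarith
end

section
/- Let k, η₁, η₂ > 0 and χ ∈ ℝ satisfy (2 − √22)/3 < kη₁χ < √2 and k²η₁η₂ < (2√2/3)·min{1, 3/2 + kη₁χ}. Let χ⁻ = max{−χ, 0} and α = (1/2)(max{χ²/2, η₂/(√2·η₁)} + (3 − 2kη₁χ⁻)/(3k²η₁²)). Then max{χ²/2, η₂/(√2·η₁)} < α, α < (3 + 2kη₁χ)/(3k²η₁²), α < 1/(k²η₁²), and η₁²α² − 3k²η₁²η₂²α + 2η₂² > 0. -/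
/-! With `t = kη₁χ`, the bound `max{χ²/2, η₂/(√2η₁)} < (3 − 2kη₁χ⁻)/(3k²η₁²)` splits into
`3t² + 4t⁻ < 6`, which holds exactly for `(2 − √22)/3 < t < √2`, and
`k²η₁η₂ < (2√2/3)(3/2 − t⁻)`, which follows from the smallness condition since
`min{1, 3/2 + t} ≤ 3/2 − t⁻`. The midpoint `α` then lies below this bound, which is itself at most
`(3 + 2t)/(3k²η₁²)` and `1/(k²η₁²)`. The quadratic in `α` is positive everywhere: `k²η₁η₂ < 2√2/3`
makes its discriminant `η₁²η₂²(9(k²η₁η₂)² − 8)` negative. -/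

theorem quadratic_pos_of_discrim_neg {K : Type*} [Field K] [LinearOrder K] [IsStrictOrderedRing K]
    {a b c : K} (ha : 0 < a) (h : discrim a b c < 0) (x : K) :
    0 < a * (x * x) + b * x + c := by
  have key : 4 * a * (a * (x * x) + b * x + c) = (2 * a * x + b) ^ 2 - discrim a b c := by
    rw [discrim]; ring
  have : 0 < 4 * a * (a * (x * x) + b * x + c) := by
    rw [key]; nlinarith [sq_nonneg (2 * a * x + b)]
  exact pos_of_mul_pos_right this (by positivity)

theorem three_mul_sq_add_four_mul_max_neg_lt_six {t : ℝ}
    (hlow : (2 - Real.sqrt 22) / 3 < t) (hup : t < Real.sqrt 2) :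
    3 * t ^ 2 + 4 * max (-t) 0 < 6 := by
  rcases le_or_gt 0 t with ht | ht
  · have : t ^ 2 < 2 := by
      simpa [Real.sq_sqrt] using pow_lt_pow_left₀ hup ht two_ne_zero
    rw [max_eq_right (neg_nonpos.mpr ht)]
    linarith
  · have hs22 : Real.sqrt 22 ^ 2 = 22 := Real.sq_sqrt (by norm_num)
    have hroot : t < (2 + Real.sqrt 22) / 3 := by
      linarith [Real.sqrt_nonneg 22]
    rw [max_eq_left (by linarith)]
    -- `3t² − 4t − 6 = 3 (t − (2 − √22)/3) (t − (2 + √22)/3)`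
    nlinarith [mul_pos (sub_pos.mpr hlow) (sub_pos.mpr hroot)]

theorem min_one_le_three_halves_sub_max_neg (t : ℝ) :
    min 1 (3 / 2 + t) ≤ 3 / 2 - max (-t) 0 := by
  rcases le_total 0 t with ht | ht
  · rw [max_eq_right (by linarith)]; linarith [min_le_left 1 (3 / 2 + t)]
  · rw [max_eq_left (by linarith)]; linarith [min_le_right 1 (3 / 2 + t)]

theorem max_lt_three_sub_two_mul_max_neg_div {k η₁ η₂ χ : ℝ} (hk : 0 < k) (hη₁ : 0 < η₁)
    (hlow : (2 - Real.sqrt 22) / 3 < k * η₁ * χ) (hup : k * η₁ * χ < Real.sqrt 2)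
    (hsmall : k ^ 2 * η₁ * η₂ < (2 * Real.sqrt 2 / 3) * min 1 (3 / 2 + k * η₁ * χ)) :
    max (χ ^ 2 / 2) (η₂ / (Real.sqrt 2 * η₁))
      < (3 - 2 * max (-(k * η₁ * χ)) 0) / (3 * k ^ 2 * η₁ ^ 2) := by
  have hden : 0 < 3 * k ^ 2 * η₁ ^ 2 := by positivity
  refine max_lt ?_ ?_
  · rw [div_lt_div_iff₀ two_pos hden]
    linear_combination three_mul_sq_add_four_mul_max_neg_lt_six hlow hup
  · rw [div_lt_div_iff₀ (by positivity) hden]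
    have hsmall' : k ^ 2 * η₁ * η₂ < (2 * Real.sqrt 2 / 3) * (3 / 2 - max (-(k * η₁ * χ)) 0) :=
      hsmall.trans_le (mul_le_mul_of_nonneg_left
        (min_one_le_three_halves_sub_max_neg _) (by positivity))
    linear_combination 3 * η₁ * hsmall'

theorem sq_mul_sq_sub_mul_add_pos {k η₁ η₂ : ℝ} (hη₁ : 0 < η₁) (hη₂ : 0 < η₂)
    (hsmall : k ^ 2 * η₁ * η₂ < 2 * Real.sqrt 2 / 3) (α : ℝ) :
    0 < η₁ ^ 2 * α ^ 2 - 3 * k ^ 2 * η₁ ^ 2 * η₂ ^ 2 * α + 2 * η₂ ^ 2 := by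
  have hsq : (k ^ 2 * η₁ * η₂) ^ 2 < 8 / 9 := by
    calc (k ^ 2 * η₁ * η₂) ^ 2 < (2 * Real.sqrt 2 / 3) ^ 2 :=
          pow_lt_pow_left₀ hsmall (by positivity) two_ne_zero
      _ = 8 / 9 := by rw [div_pow, mul_pow, Real.sq_sqrt zero_le_two]; norm_num
  have hdiscrim : discrim (η₁ ^ 2) (-(3 * k ^ 2 * η₁ ^ 2 * η₂ ^ 2)) (2 * η₂ ^ 2)
      = η₁ ^ 2 * η₂ ^ 2 * (9 * (k ^ 2 * η₁ * η₂) ^ 2 - 8) := by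
    rw [discrim]; ring
  have := quadratic_pos_of_discrim_neg (a := η₁ ^ 2) (by positivity) (by
    rw [hdiscrim]; exact mul_neg_of_pos_of_neg (by positivity) (by linarith)) α
  linarith

/-- Verification (4.34) in the proof of Lemma 4.3: under the smallness conditions (4.32),
the explicit choice (4.33) of `α` satisfies
`max{χ²/2, η₂/(√2η₁)} < α < min{(3 + 2kη₁χ)/(3k²η₁²), 1/(k²η₁²)}` and
`η₁²α² − 3k²η₁²η₂²α + 2η₂² > 0`. -/
theorem stmt5 (k η₁ η₂ χ χm α : ℝ)
    (hk : 0 < k) (hη₁ : 0 < η₁) (hη₂ : 0 < η₂)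
    (hlow : (2 - Real.sqrt 22) / 3 < k * η₁ * χ)
    (hup : k * η₁ * χ < Real.sqrt 2)
    (hsmall : k ^ 2 * η₁ * η₂ < (2 * Real.sqrt 2 / 3) * min 1 (3 / 2 + k * η₁ * χ))
    (hχm : χm = max (-χ) 0)
    (hα : α = (1 / 2) * (max (χ ^ 2 / 2) (η₂ / (Real.sqrt 2 * η₁))
      + (3 - 2 * k * η₁ * χm) / (3 * k ^ 2 * η₁ ^ 2))) :
    max (χ ^ 2 / 2) (η₂ / (Real.sqrt 2 * η₁)) < α ∧
      α < (3 + 2 * k * η₁ * χ) / (3 * k ^ 2 * η₁ ^ 2) ∧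
      α < 1 / (k ^ 2 * η₁ ^ 2) ∧
      0 < η₁ ^ 2 * α ^ 2 - 3 * k ^ 2 * η₁ ^ 2 * η₂ ^ 2 * α + 2 * η₂ ^ 2 := by
  have hkη : 0 < k * η₁ := mul_pos hk hη₁
  have hden : 0 < 3 * k ^ 2 * η₁ ^ 2 := by positivity
  have hneg : k * η₁ * χm = max (-(k * η₁ * χ)) 0 := by
    rw [hχm, mul_max_of_nonneg _ _ hkη.le]; ring_nf
  set B := (3 - 2 * k * η₁ * χm) / (3 * k ^ 2 * η₁ ^ 2) with hB
  have hMB : max (χ ^ 2 / 2) (η₂ / (Real.sqrt 2 * η₁)) < B := by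
    rw [hB, mul_assoc 2, mul_assoc 2, hneg]
    exact max_lt_three_sub_two_mul_max_neg_div hk hη₁ hlow hup hsmall
  have hαB : α < B := by rw [hα]; linarith
  refine ⟨by rw [hα]; linarith, hαB.trans_le ?_, hαB.trans_le ?_, ?_⟩
  · exact div_le_div_of_nonneg_right (by linarith [le_max_left (-(k * η₁ * χ)) 0]) hden.le
  · rw [hB, div_le_div_iff₀ hden (by positivity)]
    nlinarith [mul_nonneg (le_max_right (-(k * η₁ * χ)) 0) (sq_nonneg (k * η₁))]
  · exact sq_mul_sq_sub_mul_add_pos hη₁ hη₂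
      (hsmall.trans_le (mul_le_of_le_one_right (by positivity) (min_le_left _ _))) α
end

section
/- Let k, η₁, η₂ > 0 and χ ∈ ℝ satisfy (2 − √22)/3 < kη₁χ < √2 and k²η₁η₂ < (2√2/3)·min{1, 3/2 + kη₁χ}. Then there exist α, β, γ₁, γ₂ > 0 such that: (1 + β)η₂² < 2α/k²; (1 − 2β)α + (γ₁α − χ)² < 2γ₁α/(kη₁); 2(1 + β)αη₁² + χ²/(k²α) < 4/k²; and 1 − 2β + γ₂²/α < 2γ₂/(kη₂). -/
/-!
Write `t = kη₁χ`, `s = k²η₁η₂` and `α = a / (k²η₁²)`. With the paper's choices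
`β = (1 - a) / a`, `γ₁ = (t + 1) / (kη₁α)` and `γ₂ = α / (kη₂)`, the four coefficient
conditions become `s² < 2a²`, `3a < 3 + 2t`, `t² < 2a` and `(3a - 2)s² < a²`. Together with
`β > 0`, i.e. `a < 1`, the first three ask for `max (t²/2) (s/√2) < a < min 1 (1 + 2t/3)`, and
the smallness conditions make this interval nonempty. They also give `s² < 8/9 ≤ a² / (3a - 2)`,
so the last condition holds for every such `a`.
-/

open Real

namespace Lyapunov

noncomputable section

def α (k η₁ a : ℝ) : ℝ := a / (k ^ 2 * η₁ ^ 2)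

def β (a : ℝ) : ℝ := (1 - a) / a

def γ₁ (k η₁ χ a : ℝ) : ℝ := (k * η₁ * χ + 1) * k * η₁ / a

def γ₂ (k η₁ η₂ a : ℝ) : ℝ := a / (k ^ 3 * η₁ ^ 2 * η₂)

end

variable {k η₁ η₂ χ a : ℝ}

lemma α_pos (hk : 0 < k) (hη₁ : 0 < η₁) (ha : 0 < a) : 0 < α k η₁ a := by
  unfold α; positivity

lemma β_pos (ha : 0 < a) (ha₁ : a < 1) : 0 < β a :=
  div_pos (sub_pos.mpr ha₁) ha

lemma γ₁_pos (hk : 0 < k) (hη₁ : 0 < η₁) (ha : 0 < a) (hχ : -1 < k * η₁ * χ) :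
    0 < γ₁ k η₁ χ a := by
  have : 0 < k * η₁ * χ + 1 := by linarith
  unfold γ₁; positivity

lemma γ₂_pos (hk : 0 < k) (hη₁ : 0 < η₁) (hη₂ : 0 < η₂) (ha : 0 < a) :
    0 < γ₂ k η₁ η₂ a := by
  unfold γ₂; positivity

lemma A₁_pos (hk : 0 < k) (hη₁ : 0 < η₁) (ha : 0 < a)
    (h : (k ^ 2 * η₁ * η₂) ^ 2 < 2 * a ^ 2) :
    (1 + β a) * η₂ ^ 2 < 2 * α k η₁ a / k ^ 2 := by
  unfold α β
  rw [← sub_pos]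
  field_simp
  linarith

lemma A₂_pos (hk : 0 < k) (hη₁ : 0 < η₁) (ha : 0 < a) (h : 3 * a < 3 + 2 * (k * η₁ * χ)) :
    (1 - 2 * β a) * α k η₁ a + (γ₁ k η₁ χ a * α k η₁ a - χ) ^ 2 <
      2 * γ₁ k η₁ χ a * α k η₁ a / (k * η₁) := by
  unfold α β γ₁
  rw [← sub_pos]
  field_simp
  linarith

lemma A₃_pos (hk : 0 < k) (hη₁ : 0 < η₁) (ha : 0 < a) (h : (k * η₁ * χ) ^ 2 < 2 * a) :
    2 * (1 + β a) * α k η₁ a * η₁ ^ 2 + χ ^ 2 / (k ^ 2 * α k η₁ a) < 4 / k ^ 2 := by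
  unfold α β
  rw [← sub_pos]
  field_simp
  linarith

lemma A₄_pos (hk : 0 < k) (hη₁ : 0 < η₁) (hη₂ : 0 < η₂) (ha : 0 < a)
    (h : (3 * a - 2) * (k ^ 2 * η₁ * η₂) ^ 2 < a ^ 2) :
    1 - 2 * β a + γ₂ k η₁ η₂ a ^ 2 / α k η₁ a < 2 * γ₂ k η₁ η₂ a / (k * η₂) := by
  unfold α β γ₂
  rw [← sub_pos]
  field_simp
  linarith

end Lyapunov

lemma neg_one_lt_of_two_sub_sqrt_22_div_three_lt {t : ℝ} (hlow : (2 - √22) / 3 < t) :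
    -1 < t := by
  have : √22 < 5 := (sqrt_lt' (by norm_num)).mpr (by norm_num)
  linarith

lemma sq_div_two_lt_min {t : ℝ} (hlow : (2 - √22) / 3 < t) (hup : t < √2) :
    t ^ 2 / 2 < min 1 (1 + 2 / 3 * t) := by
  have h1 : 1 < √2 := (lt_sqrt (by norm_num)).mpr (by norm_num)
  have h2 : √2 < 3 / 2 := (sqrt_lt' (by norm_num)).mpr (by norm_num)
  have h22 : 4 < √22 := (lt_sqrt (by norm_num)).mpr (by norm_num)
  have hsq2 : t ^ 2 < 2 := by
    have := neg_one_lt_of_two_sub_sqrt_22_div_three_lt hlow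
    simpa using sq_lt_sq' (by linarith) hup
  have hsq22 : (3 * t - 2) ^ 2 < 22 := by
    simpa using sq_lt_sq' (by linarith) (by linarith : 3 * t - 2 < √22)
  exact lt_min (by linarith) (by linarith)

lemma div_sqrt_two_lt_min {t s : ℝ} (hsmall : s < 2 * √2 / 3 * min 1 (3 / 2 + t)) :
    s / √2 < min 1 (1 + 2 / 3 * t) := by
  have h2 : 0 < √2 := by positivity
  rw [div_lt_iff₀ h2]
  calc s < 2 * √2 / 3 * min 1 (3 / 2 + t) := hsmall
    _ ≤ 2 * √2 / 3 * min (3 / 2) (3 / 2 + t) := by gcongr; norm_num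
    _ = min (2 * √2 / 3 * (3 / 2)) (2 * √2 / 3 * (3 / 2 + t)) :=
      mul_min_of_nonneg _ _ (by positivity)
    _ = min (1 * √2) ((1 + 2 / 3 * t) * √2) := by ring_nf
    _ = min 1 (1 + 2 / 3 * t) * √2 := (min_mul_of_nonneg _ _ h2.le).symm

lemma sub_mul_sq_lt_sq {s a : ℝ} (ha : 0 < a) (hs : s ^ 2 < 8 / 9) :
    (3 * a - 2) * s ^ 2 < a ^ 2 := by
  rcases le_or_gt (3 * a - 2) 0 with h | h
  · nlinarith [sq_nonneg s]
  · nlinarith [sq_nonneg (3 * a - 4)]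

lemma exists_normalized_parameter {t s : ℝ} (hs : 0 < s) (hlow : (2 - √22) / 3 < t)
    (hup : t < √2) (hsmall : s < 2 * √2 / 3 * min 1 (3 / 2 + t)) :
    ∃ a, 0 < a ∧ a < 1 ∧ s ^ 2 < 2 * a ^ 2 ∧ 3 * a < 3 + 2 * t ∧ t ^ 2 < 2 * a ∧
      (3 * a - 2) * s ^ 2 < a ^ 2 := by
  obtain ⟨a, hlo, hhi⟩ :=
    exists_between (max_lt (sq_div_two_lt_min hlow hup) (div_sqrt_two_lt_min hsmall))
  rw [max_lt_iff] at hlo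
  rw [lt_min_iff] at hhi
  have ha : 0 < a := lt_of_le_of_lt (by positivity) hlo.1
  have hs_sq : s ^ 2 < 8 / 9 := by
    have : s < 2 * √2 / 3 :=
      hsmall.trans_le (mul_le_of_le_one_right (by positivity) (min_le_left _ _))
    calc s ^ 2 < (2 * √2 / 3) ^ 2 := by gcongr
      _ = 8 / 9 := by rw [div_pow, mul_pow, sq_sqrt (by norm_num)]; norm_num
  have hsa : s < a * √2 := (div_lt_iff₀ (by positivity)).mp hlo.2
  refine ⟨a, ha, hhi.1, ?_, by linarith, by linarith, sub_mul_sq_lt_sq ha hs_sq⟩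
  calc s ^ 2 < (a * √2) ^ 2 := by gcongr
    _ = 2 * a ^ 2 := by rw [mul_pow, sq_sqrt (by norm_num), mul_comm]

open Lyapunov in
/-- Algebraic core (4.33)–(4.35) of Lemma 4.3: under the smallness conditions (4.32), the
Lyapunov-functional parameters `α, β, γ₁, γ₂` can be chosen positive so that the four
coefficients `A₁, A₂, A₃, A₄` in the dissipation inequality are all positive. -/
theorem stmt6 (k η₁ η₂ χ : ℝ)
    (hk : 0 < k) (hη₁ : 0 < η₁) (hη₂ : 0 < η₂)
    (hlow : (2 - Real.sqrt 22) / 3 < k * η₁ * χ)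
    (hup : k * η₁ * χ < Real.sqrt 2)
    (hsmall : k ^ 2 * η₁ * η₂ < (2 * Real.sqrt 2 / 3) * min 1 (3 / 2 + k * η₁ * χ)) :
    ∃ α β γ₁ γ₂ : ℝ, 0 < α ∧ 0 < β ∧ 0 < γ₁ ∧ 0 < γ₂ ∧
      (1 + β) * η₂ ^ 2 < 2 * α / k ^ 2 ∧
      (1 - 2 * β) * α + (γ₁ * α - χ) ^ 2 < 2 * γ₁ * α / (k * η₁) ∧
      2 * (1 + β) * α * η₁ ^ 2 + χ ^ 2 / (k ^ 2 * α) < 4 / k ^ 2 ∧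
      1 - 2 * β + γ₂ ^ 2 / α < 2 * γ₂ / (k * η₂) := by
  obtain ⟨a, ha, ha₁, h₁, h₂, h₃, h₄⟩ :=
    exists_normalized_parameter (by positivity) hlow hup hsmall
  have hχ := neg_one_lt_of_two_sub_sqrt_22_div_three_lt hlow
  exact ⟨α k η₁ a, β a, γ₁ k η₁ χ a, γ₂ k η₁ η₂ a,
    α_pos hk hη₁ ha, β_pos ha ha₁, γ₁_pos hk hη₁ ha hχ, γ₂_pos hk hη₁ hη₂ ha,
    A₁_pos hk hη₁ ha h₁, A₂_pos hk hη₁ ha h₂, A₃_pos hk hη₁ ha h₃, A₄_pos hk hη₁ hη₂ ha h₄⟩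
end
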